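/- arXiv:2007.12373 — 2 statements merged into one kernel-verified Lean document; each statement's English description precedes it below -/
import Mathlib

section
/- Let τ be an infinite cardinal and let X_α be a nonempty compact Hausdorff space for each α ∈ A, where |A| = τ. Then the topological sum X = ⊕{X_α : α ∈ A} is almost a_{<τ}-subcompact, i.e., for every S ⊆ X with |S| < τ there is a condensation from X \ S onto a compact Hausdorff space. -/
open Cardinal Topology

universe u

/-- A Hausdorff space is *subcompact* if it admits a condensation (continuous bijection)
onto a compact Hausdorff space. -/
def Subcompact (X : Type u) [TopologicalSpace X] : Prop :=
  ∃ (Y : Type u) (_ : TopologicalSpace Y), CompactSpace Y ∧ T2Space Y ∧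
    ∃ f : X → Y, Continuous f ∧ Function.Bijective f

/-- A compact Hausdorff space `X` is an `a_τ`-space if for every `C ⊆ X` with `#C ≤ τ`
there is a condensation from the subspace `X \ C` onto a compact Hausdorff space. -/
def ATauSpace (τ : Cardinal.{u}) (X : Type u) [TopologicalSpace X] : Prop :=
  CompactSpace X ∧ T2Space X ∧ ∀ C : Set X, #C ≤ τ → Subcompact ↥(Cᶜ)

/-- A compact Hausdorff space `X` is a strictly `a_τ`-space if for every `C ⊆ X` with
`#C ≤ τ` there is a condensation from `X \ C` onto a compact Hausdorff space `K`
extending to a continuous map `X → K` (encoded: a continuous `g : X → K` whose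
restriction to `X \ C` is bijective). -/
def StrictATauSpace (τ : Cardinal.{u}) (X : Type u) [TopologicalSpace X] : Prop :=
  CompactSpace X ∧ T2Space X ∧ ∀ C : Set X, #C ≤ τ →
    ∃ (K : Type u) (_ : TopologicalSpace K), CompactSpace K ∧ T2Space K ∧
      ∃ g : X → K, Continuous g ∧ Function.Bijective fun x : ↥(Cᶜ) => g x

/-- A Hausdorff space `X` is `a_τ`-subcompact if for every `C ⊆ X` with `#C ≤ τ` there
is a condensation from `X \ C` onto an `a_τ`-space. -/
def ATauSubcompact (τ : Cardinal.{u}) (X : Type u) [TopologicalSpace X] : Prop :=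
  ∀ C : Set X, #C ≤ τ →
    ∃ (Y : Type u) (_ : TopologicalSpace Y), ATauSpace τ Y ∧
      ∃ f : ↥(Cᶜ) → Y, Continuous f ∧ Function.Bijective f

/-- A Hausdorff space `X` is strictly `a_τ`-subcompact if for every `C ⊆ X` with `#C ≤ τ`
there is a condensation from `X \ C` onto a strictly `a_τ`-space `Y` extending to a
continuous map `X → Y`. -/
def StrictATauSubcompact (τ : Cardinal.{u}) (X : Type u) [TopologicalSpace X] : Prop :=
  ∀ C : Set X, #C ≤ τ →
    ∃ (Y : Type u) (_ : TopologicalSpace Y), StrictATauSpace τ Y ∧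
      ∃ g : X → Y, Continuous g ∧ Function.Bijective fun x : ↥(Cᶜ) => g x

/-- A Hausdorff space `X` is almost strictly `a_τ`-subcompact if for every `C ⊆ X` with
`#C ≤ τ` there is a condensation from `X \ C` onto a compact Hausdorff space `Y`
extending to a continuous map `X → Y`. -/
def AlmostStrictATauSubcompact (τ : Cardinal.{u}) (X : Type u) [TopologicalSpace X] : Prop :=
  ∀ C : Set X, #C ≤ τ →
    ∃ (Y : Type u) (_ : TopologicalSpace Y), CompactSpace Y ∧ T2Space Y ∧
      ∃ g : X → Y, Continuous g ∧ Function.Bijective fun x : ↥(Cᶜ) => g x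

/-!
The summands meeting `S` are fewer than `τ = #A`, so some set `R` of summands missing `S` is in
bijection `e : R ≃ S` with `S`. Graft each compact summand `X r`, `r ∈ R`, into the hole at
`e r`: map `(Σ i, X i)` to `(Σ i, X i) × Π r : R, X r` by sending `x ∈ X r` to `e r` together
with the base points `p` updated by `x` at `r`, and every other `x` to `(x, p)`. On the
complement of `S` this is a continuous bijection onto a closed, hence locally compact Hausdorff,
subspace, and a locally compact Hausdorff space condenses onto a compact one.
-/

open Set Function

theorem Subcompact.of_continuous_bijective {X Y : Type u} [TopologicalSpace X]
    [TopologicalSpace Y] (h : Subcompact Y) {f : X → Y} (hf : Continuous f)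
    (hbij : Bijective f) : Subcompact X := by
  obtain ⟨Z, _, hZc, hZt, g, hg, hgbij⟩ := h
  exact ⟨Z, _, hZc, hZt, g ∘ f, hg.comp hf, hgbij.comp hbij⟩

instance Sigma.weaklyLocallyCompactSpace {ι : Type*} {X : ι → Type*}
    [∀ i, TopologicalSpace (X i)] [∀ i, WeaklyLocallyCompactSpace (X i)] :
    WeaklyLocallyCompactSpace (Σ i, X i) where
  exists_compact_mem_nhds := fun ⟨i, x⟩ ↦
    let ⟨K, hK, hKx⟩ := exists_compact_mem_nhds x
    ⟨Sigma.mk i '' K, hK.image continuous_sigmaMk,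
      Sigma.nhds_mk i x ▸ Filter.image_mem_map hKx⟩

/-- Send a chosen point `t₀` to the point at infinity of the one-point compactification
of `T \ {t₀}`; the neighbourhoods of `t₀` are co-compact because compact sets are closed. -/
theorem subcompact_of_locallyCompactSpace (T : Type u) [TopologicalSpace T] [T2Space T]
    [LocallyCompactSpace T] : Subcompact T := by
  classical
  rcases isEmpty_or_nonempty T with hT | ⟨⟨t₀⟩⟩
  · exact ⟨T, _, inferInstance, inferInstance, id, continuous_id, bijective_id⟩
  let T' := ({t₀}ᶜ : Set T)
  have hT' : IsOpen T' := isOpen_compl_singleton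
  have : LocallyCompactSpace T' := hT'.locallyCompactSpace
  let f : T → OnePoint T' := fun t ↦
    if h : t = t₀ then OnePoint.infty else ((⟨t, h⟩ : T') : OnePoint T')
  have hf_restrict : T'.domRestrict f = (↑) := funext fun t ↦ dif_neg t.2
  have hf_infty : ContinuousAt f t₀ := by
    rw [ContinuousAt, show f t₀ = OnePoint.infty from dif_pos rfl]
    refine (OnePoint.hasBasis_nhds_infty (X := T')).tendsto_right_iff.2 fun K hK ↦ ?_
    have hK' : IsClosed (((↑) : T' → T) '' K) := (hK.2.image continuous_subtype_val).isClosed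
    refine Filter.mem_of_superset (hK'.isOpen_compl.mem_nhds ?_) fun t ht ↦ ?_
    · rintro ⟨t, -, ht⟩
      exact t.2 ht
    · by_cases h : t = t₀
      · simp [f, h]
      · exact Or.inl ⟨⟨t, h⟩, fun htK ↦ ht ⟨_, htK, rfl⟩, (dif_neg h : f t = _).symm⟩
  refine ⟨OnePoint T', _, inferInstance, inferInstance, f, ?_, ?_, ?_⟩
  · refine continuous_iff_continuousAt.2 fun t ↦ ?_
    by_cases h : t = t₀
    · exact h ▸ hf_infty
    · have : ContinuousOn f T' := by
        rw [continuousOn_iff_continuous_domRestrict, hf_restrict]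
        exact OnePoint.continuous_coe
      exact this.continuousAt (hT'.mem_nhds h)
  · intro t t' htt'
    by_cases h : t = t₀ <;> by_cases h' : t' = t₀ <;> simp_all [f, Subtype.ext_iff]
  · rintro (_ | t)
    · exact ⟨t₀, dif_pos rfl⟩
    · exact ⟨t, dif_neg t.2⟩

section Graft

variable {ι : Type u} {X : ι → Type u} {S : Set (Σ i, X i)}
  {R : Set ι} (e : R ≃ S) (p : ∀ r : R, X r)

open scoped Classical

noncomputable def graft (x : Σ i, X i) : (Σ i, X i) × ∀ r : R, X r :=
  if h : x.1 ∈ R then (e ⟨x.1, h⟩, update p ⟨x.1, h⟩ x.2) else (x, p)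

def graftRange : Set ((Σ i, X i) × ∀ r : R, X r) :=
  {z | z.1.1 ∉ R ∧ ∀ r, z.1 ≠ e r → z.2 r = p r}

noncomputable def ungraft (z : (Σ i, X i) × ∀ r : R, X r) : Σ i, X i :=
  if h : z.1 ∈ S then ⟨e.symm ⟨z.1, h⟩, z.2 (e.symm ⟨z.1, h⟩)⟩ else z.1

theorem continuous_graft [∀ i, TopologicalSpace (X i)] : Continuous (graft e p) := by
  apply continuous_sigma
  intro i
  by_cases h : i ∈ R
  · simp only [graft, dif_pos h]
    show Continuous fun a : X i ↦ ((e ⟨i, h⟩ : Σ i, X i), update p ⟨i, h⟩ a)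
    exact continuous_const.prodMk (continuous_const.update _ continuous_id)
  · simp only [graft, dif_neg h]
    exact continuous_sigmaMk.prodMk continuous_const

theorem graft_mem_graftRange (hR : ∀ s ∈ S, (s : Σ i, X i).1 ∉ R) (x : Σ i, X i) :
    graft e p x ∈ graftRange e p := by
  unfold graft
  split_ifs with h
  · refine ⟨hR _ (e _).2, fun r hr ↦ update_of_ne (fun hr' ↦ hr (by rw [hr'])) _ _⟩
  · exact ⟨h, fun _ _ ↦ rfl⟩

theorem graft_mk_coe (r : R) (v : X r) :
    graft e p ⟨r, v⟩ = ((e r : Σ i, X i), update p r v) := by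
  rw [graft, dif_pos r.2]

theorem ungraft_equiv_apply (r : R) (q : ∀ r : R, X r) :
    ungraft e ((e r : Σ i, X i), q) = ⟨r, q r⟩ := by
  rw [ungraft, dif_pos (e r).2]
  change (⟨e.symm (e r), q (e.symm (e r))⟩ : Σ i, X i) = _
  rw [e.symm_apply_apply]

theorem ungraft_graft {x : Σ i, X i} (hx : x ∉ S) : ungraft e (graft e p x) = x := by
  unfold graft
  split_ifs with h
  · rw [ungraft_equiv_apply, update_self]
  · simp [ungraft, hx]

theorem graft_ungraft {z : (Σ i, X i) × ∀ r : R, X r} (hz : z ∈ graftRange e p) :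
    graft e p (ungraft e z) = z := by
  obtain ⟨⟨x, q⟩, hzR, hzq⟩ := z, hz
  by_cases hS : x ∈ S
  · obtain ⟨r, rfl⟩ : ∃ r, (e r : Σ i, X i) = x := ⟨e.symm ⟨x, hS⟩, by simp⟩
    rw [ungraft_equiv_apply, graft_mk_coe, Prod.mk.injEq, update_eq_iff]
    exact ⟨rfl, rfl, fun r' hr' ↦
      (hzq r' fun h ↦ hr' (e.injective (Subtype.ext h.symm))).symm⟩
  · rw [ungraft, dif_neg hS, graft, dif_neg hzR, Prod.mk.injEq]
    exact ⟨rfl, funext fun r ↦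
      (hzq r fun h ↦ hS (by rw [show x = _ from h]; exact (e r).2)).symm⟩

theorem ungraft_notMem (hR : ∀ s ∈ S, (s : Σ i, X i).1 ∉ R)
    (z : (Σ i, X i) × ∀ r : R, X r) :
    ungraft e z ∉ S := by
  unfold ungraft
  split_ifs with h
  · exact fun hS ↦ hR _ hS (e.symm ⟨z.1, h⟩).2
  · exact h

theorem isClosed_graftRange [∀ i, TopologicalSpace (X i)] [∀ i, T2Space (X i)] :
    IsClosed (graftRange e p) := by
  have hR : IsClosed {x : Σ i, X i | x.1 ∉ R} :=
    isClosed_sigma_iff.2 fun i ↦ isClosed_const (p := i ∉ R)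
  have hp (r : R) :
      IsClosed {z : (Σ i, X i) × ∀ r : R, X r | z.1 = e r ∨ z.2 r = p r} :=
    (isClosed_singleton.preimage continuous_fst).union
      (isClosed_singleton.preimage ((continuous_apply r).comp continuous_snd))
  simp only [graftRange, ne_eq, imp_iff_not_or, not_not, ofPred_and, ofPred_forall]
  exact (hR.preimage continuous_fst).inter (isClosed_iInter hp)

end Graft

theorem subcompact_compl_of_equiv {ι : Type u} {X : ι → Type u} [∀ i, TopologicalSpace (X i)]
    [∀ i, CompactSpace (X i)] [∀ i, T2Space (X i)] {S : Set (Σ i, X i)} {R : Set ι}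
    (e : R ≃ S) (p : ∀ r : R, X r) (hR : ∀ s ∈ S, (s : Σ i, X i).1 ∉ R) :
    Subcompact ↥Sᶜ := by
  have := (isClosed_graftRange e p).locallyCompactSpace
  refine (subcompact_of_locallyCompactSpace (graftRange e p)).of_continuous_bijective
    (f := fun x ↦ ⟨graft e p x, graft_mem_graftRange e p hR x⟩)
    (((continuous_graft e p).comp continuous_subtype_val).subtype_mk _) ?_
  exact bijective_iff_has_inverse.2 ⟨fun z ↦ ⟨ungraft e z, ungraft_notMem e hR z⟩,
    fun x ↦ Subtype.ext (ungraft_graft e p x.2), fun z ↦ Subtype.ext (graft_ungraft e p z.2)⟩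

/-- a topological sum of `τ` many nonempty compact Hausdorff spaces is
almost `a_{<τ}`-subcompact: removing fewer than `τ` points leaves a subcompact space. -/
theorem stmt_7 (τ : Cardinal.{u}) (hτ : ℵ₀ ≤ τ)
    (A : Type u) (hA : #A = τ)
    (Xa : A → Type u) [∀ a, TopologicalSpace (Xa a)] [∀ a, CompactSpace (Xa a)]
    [∀ a, T2Space (Xa a)] (hne : ∀ a, Nonempty (Xa a)) :
    ∀ S : Set (Σ a, Xa a), #S < τ → Subcompact ↥(Sᶜ) := by
  intro S hS
  subst hA
  have : Infinite A := Cardinal.infinite_iff.2 hτ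
  have hB : #(Sigma.fst '' S) < #A := mk_image_le.trans_lt hS
  obtain ⟨R, hRB, hRS⟩ :=
    le_mk_iff_exists_subset.1 (hS.le.trans_eq (mk_compl_of_infinite _ hB).symm)
  obtain ⟨e⟩ := Cardinal.eq.1 hRS
  exact subcompact_compl_of_equiv e (fun r ↦ (hne r).some)
    fun s hs hsR ↦ hRB hsR ⟨s, hs, rfl⟩
end

section
/- Let 𝔪 be an infinite cardinal and let X be a dyadic compact space such that the character χ(x, X) > 𝔪 at every point x ∈ X. Then X is a strictly a_𝔪-space. -/
open Cardinal Topology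

universe u

/-!
Fix a continuous surjection `f : 2^T → X` and `C ⊆ X` with `#C ≤ 𝔪`. Running through `C` in a
well order, pick for every `c ∈ C` points `u_c, z_c` of the Cantor cube with `f u_c = c` that differ
in finitely many coordinates, so that the sets of differing coordinates are pairwise disjoint and
the points `p c = f z_c` lie outside `C` and are pairwise distinct. Each step is possible because
otherwise every finite change of the fibre `f⁻¹ c` off a set of `≤ 𝔪` coordinates would stay in a
set of `≤ 𝔪` points; this makes the fibre a cylinder over `≤ 𝔪` coordinates, so `χ(c, X) ≤ 𝔪`.
A continuous real function on `2^T` depends up to `ε` on finitely many coordinates, so disjointness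
gives `φ c - φ (p c) → 0` along the cofinite filter for every continuous `φ` on `X`. Hence gluing
each `c` to `p c` is a closed equivalence relation, and `X ∖ C` condenses onto the compact Hausdorff
quotient.
-/

open Set Filter Function

theorem Cardinal.mk_iUnion_le_of_le {α ι : Type u} {m : Cardinal.{u}} (hm : ℵ₀ ≤ m)
    {s : ι → Set α} (hι : #ι ≤ m) (hs : ∀ i, #(s i) ≤ m) : #(⋃ i, s i) ≤ m :=
  (mk_iUnion_le s).trans (mul_le_of_le hm hι (ciSup_le' hs))

theorem Cardinal.mk_finset_le_of_le {α : Type u} {m : Cardinal.{u}} (hm : ℵ₀ ≤ m)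
    (hα : #α ≤ m) : #(Finset α) ≤ m := by
  classical
  exact (mk_le_of_surjective List.toFinset_surjective).trans
    ((mk_list_le_max α).trans (max_le hm hα))

section CantorCube

variable {T A : Type*} [TopologicalSpace A] [DiscreteTopology A]

theorem exists_finset_pi_singleton_subset_of_mem_nhds {v : T → A} {s : Set (T → A)}
    (hs : s ∈ 𝓝 v) : ∃ I : Finset T, (I : Set T).pi (fun t => {v t}) ⊆ s := by
  rw [nhds_pi, Filter.mem_pi'] at hs
  obtain ⟨I, V, hV, hVs⟩ := hs
  refine ⟨I, (Set.pi_mono fun t _ => ?_).trans hVs⟩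
  simpa [nhds_discrete] using hV t

variable [CompactSpace A]

theorem exists_finset_dist_lt_of_eqOn {E : Type*} [PseudoMetricSpace E] {h : (T → A) → E}
    (hh : Continuous h) {ε : ℝ} (hε : 0 < ε) :
    ∃ G : Finset T, ∀ u v, EqOn u v G → dist (h u) (h v) < ε := by
  classical
  have hbox : ∀ z, ∃ I : Finset T,
      (I : Set T).pi (fun t => {z t}) ⊆ h ⁻¹' Metric.ball (h z) (ε / 2) :=
    fun z => exists_finset_pi_singleton_subset_of_mem_nhds
      (hh.continuousAt.preimage_mem_nhds (Metric.ball_mem_nhds _ (half_pos hε)))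
  choose I hI using hbox
  obtain ⟨s, hs⟩ := isCompact_univ.elim_nhds_subcover (fun z => (I z : Set T).pi fun t => {z t})
    (fun z _ => set_pi_mem_nhds (I z).finite_toSet fun t _ => isOpen_discrete _ |>.mem_nhds rfl)
  refine ⟨s.sup I, fun u v huv => ?_⟩
  obtain ⟨z, hz, hu⟩ := mem_iUnion₂.1 (hs.2 (mem_univ u))
  have hv : v ∈ (I z : Set T).pi fun t => {z t} := fun t ht =>
    (huv (Finset.mem_sup.2 ⟨z, hz, ht⟩)).symm.trans (hu t ht)
  calc dist (h u) (h v) ≤ dist (h u) (h z) + dist (h v) (h z) := dist_triangle_right _ _ _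
    _ < ε / 2 + ε / 2 := add_lt_add (hI z hu) (hI z hv)
    _ = ε := add_halves ε

theorem exists_countable_eqOn_imp_eq {E : Type*} [MetricSpace E] {h : (T → A) → E}
    (hh : Continuous h) : ∃ R : Set T, R.Countable ∧ ∀ u v, EqOn u v R → h u = h v := by
  choose G hG using fun n : ℕ => exists_finset_dist_lt_of_eqOn hh (Nat.one_div_pos_of_nat (n := n))
  refine ⟨⋃ n, (G n : Set T), countable_iUnion fun n => (G n).countable_toSet, fun u v huv => ?_⟩
  refine dist_le_zero.1 (le_of_forall_pos_lt_add fun ε hε => ?_)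
  obtain ⟨n, hn⟩ := exists_nat_one_div_lt hε
  rw [zero_add]
  exact (hG n u v (huv.mono (subset_iUnion (fun n => (G n : Set T)) n))).trans hn

theorem eventually_cofinite_dist_lt_of_pairwise_disjoint {ι E : Type*} [PseudoMetricSpace E]
    {h : (T → A) → E}
    (hh : Continuous h) {u v : ι → T → A}
    (huv : Pairwise (Disjoint on fun i => {t | u i t ≠ v i t})) {ε : ℝ} (hε : 0 < ε) :
    ∀ᶠ i in cofinite, dist (h (u i)) (h (v i)) < ε := by
  obtain ⟨G, hG⟩ := exists_finset_dist_lt_of_eqOn hh hε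
  have hfin : (⋃ t ∈ G, {i | u i t ≠ v i t}).Finite :=
    G.finite_toSet.biUnion fun t _ => Subsingleton.finite fun i hi j hj =>
      by_contra fun hij => (huv hij).ne_of_mem hi hj rfl
  refine hfin.subset fun i hi => ?_
  by_contra hG'
  simp only [mem_iUnion, mem_ofPred_eq, not_exists, not_not] at hG'
  exact hi (hG (u i) (v i) fun t ht => hG' t ht)

end CantorCube

section Fiber

variable {T A X : Type*} [TopologicalSpace A] [TopologicalSpace X] {f : (T → A) → X}

theorem exists_countable_forall_eqOn_imp_ne [DiscreteTopology A] [CompactSpace A]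
    [CompletelyRegularSpace X] [T1Space X] (hf : Continuous f) {c d : X} (hcd : c ≠ d) :
    ∃ R : Set T, R.Countable ∧ ∀ u v, EqOn u v R → f u = c → f v ≠ d := by
  obtain ⟨φ, hφ, hφc, hφd⟩ :=
    CompletelyRegularSpace.completely_regular c {d} isClosed_singleton hcd
  obtain ⟨R, hR, hRφ⟩ := exists_countable_eqOn_imp_eq (hφ.comp hf)
  refine ⟨R, hR, fun u v huv hu hv => zero_ne_one (α := unitInterval) ?_⟩
  simpa [hu, hv, hφc, hφd rfl] using hRφ u v huv

theorem eqOn_imp_eq_of_forall_finite_diff [T1Space X] (hf : Continuous f) {c : X} {R : Set T}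
    {B : Set X} (hB : ∀ u z, f u = c → {t | u t ≠ z t}.Finite →
      Disjoint {t | u t ≠ z t} R → f z ∈ B)
    (hsep : ∀ d ∈ B, d ≠ c → ∀ u v, EqOn u v R → f u = c → f v ≠ d)
    {u v : T → A} (huv : EqOn u v R) (hu : f u = c) : f v = c := by
  classical
  by_contra hv
  obtain ⟨I, hI⟩ := exists_finset_piecewise_mem_of_mem_nhds
    ((isOpen_compl_singleton.preimage hf).mem_nhds hv) u
  have hdiff : {t | u t ≠ I.piecewise v u t} ⊆ (I : Set T) \ R := fun t ht => by
    by_cases htI : t ∈ I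
    · simp only [mem_ofPred_eq, Finset.piecewise_eq_of_mem _ _ _ htI] at ht
      exact ⟨htI, fun htR => ht (huv htR)⟩
    · simp [Finset.piecewise_eq_of_notMem _ _ _ htI] at ht
  have hzB : f (I.piecewise v u) ∈ B := hB u _ hu (I.finite_toSet.sdiff.subset hdiff)
    (disjoint_of_subset_left hdiff disjoint_sdiff_left)
  refine hsep _ hzB hI u _ (fun t ht => ?_) hu rfl
  by_cases htI : t ∈ I
  · simp [Finset.piecewise_eq_of_mem _ _ _ htI, huv ht]
  · simp [Finset.piecewise_eq_of_notMem _ _ _ htI]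

end Fiber

theorem exists_hasBasis_nhds_finset_of_iInter_subset_singleton {X ι : Type*}
    [TopologicalSpace X] [RegularSpace X] [CompactSpace X] {x : X} {U : ι → Set X}
    (hU : ∀ i, U i ∈ 𝓝 x) (hx : ⋂ i, U i ⊆ {x}) :
    ∃ W : Finset ι → Set X, (𝓝 x).HasBasis (fun _ => True) W := by
  classical
  choose W hWx hWc hWU using fun i => exists_mem_nhds_isClosed_subset (hU i)
  refine ⟨fun s => ⋂ i ∈ s, W i, ⟨fun V => ⟨fun hV => ?_, fun ⟨s, _, hs⟩ =>
    mem_of_superset ((Finset.iInter_mem_sets s).2 fun i _ => hWx i) hs⟩⟩⟩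
  have hdir : Directed (· ⊇ ·) fun s : Finset ι => ⋂ i ∈ s, W i := fun s t =>
    ⟨s ∪ t, biInter_subset_biInter_left fun i hi => Finset.mem_union_left t hi,
      biInter_subset_biInter_left fun i hi => Finset.mem_union_right s hi⟩
  have hVx : ∀ y ∈ ⋂ s : Finset ι, ⋂ i ∈ s, W i, V ∈ 𝓝 y := fun y hy => by
    have hyW : y ∈ ⋂ i, W i := mem_iInter.2 fun i =>
      mem_iInter₂.1 (mem_iInter.1 hy {i}) i (Finset.mem_singleton_self i)
    rwa [hx (iInter_mono hWU hyW)]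
  obtain ⟨s, hs⟩ := exists_subset_nhds_of_compactSpace hdir
    (fun s => isClosed_biInter fun i _ => hWc i) hVx
  exact ⟨s, trivial, hs⟩

theorem exists_hasBasis_nhds_card_le_of_eqOn_imp_eq {X T : Type u} [TopologicalSpace X]
    [CompactSpace X] [T2Space X] {f : (T → Bool) → X} (hf : Continuous f)
    (hsurj : Surjective f) {c : X} {R : Set T} (hR : ∀ u v, EqOn u v R → f u = c → f v = c)
    {m : Cardinal.{u}} (hm : ℵ₀ ≤ m) (hRm : #R ≤ m) :
    ∃ bs : Set (Set X), (𝓝 c).HasBasis (· ∈ bs) id ∧ #bs ≤ m := by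
  classical
  let cyl : Finset (R × Bool) → Set (T → Bool) := fun p => {w | ∀ x ∈ p, w x.1 = x.2}
  have hcyl : ∀ p, IsClosed (cyl p) := fun p => by
    simp only [cyl, ofPred_forall]
    exact isClosed_biInter fun x _ => isClosed_eq (continuous_apply _) continuous_const
  let U : {p // c ∉ f '' cyl p} → Set X := fun p => (f '' cyl p)ᶜ
  have hU : ∀ p, U p ∈ 𝓝 c := fun p =>
    ((hcyl p).isCompact.image hf).isClosed.isOpen_compl.mem_nhds p.2
  have hUc : ⋂ p, U p ⊆ {c} := by
    intro y hy
    by_contra hyc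
    obtain ⟨v, rfl⟩ := hsurj y
    have hempty : f ⁻¹' {c} ∩ ⋂ t : R, {w | w t = v t} = ∅ :=
      eq_empty_iff_forall_notMem.2 fun w ⟨hw, hwv⟩ =>
        hyc (hR w v (fun t ht => mem_iInter.1 hwv ⟨t, ht⟩) hw)
    obtain ⟨s, hs⟩ := (isClosed_singleton.preimage hf).isCompact.elim_finite_subfamily_closed
      (fun t : R => {w | w t = v t}) (fun t => isClosed_eq (continuous_apply _) continuous_const)
      hempty
    have hp : c ∉ f '' cyl (s.image fun t => (t, v t)) := by
      rintro ⟨w, hw, hwc⟩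
      have : w ∈ f ⁻¹' {c} ∩ ⋂ t ∈ s, {w | w t = v t} :=
        ⟨hwc, mem_iInter₂.2 fun t ht => hw (t, v t) (Finset.mem_image_of_mem _ ht)⟩
      rwa [hs] at this
    refine mem_iInter.1 hy ⟨_, hp⟩ ⟨v, fun x hx => ?_, rfl⟩
    obtain ⟨t, -, rfl⟩ := Finset.mem_image.1 hx
    rfl
  obtain ⟨W, hW⟩ := exists_hasBasis_nhds_finset_of_iInter_subset_singleton hU hUc
  refine ⟨range W, by simpa using hW.to_image_id', mk_range_le.trans ?_⟩
  refine mk_finset_le_of_le hm ((mk_subtype_le _).trans (mk_finset_le_of_le hm ?_))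
  simpa using mul_le_of_le hm hRm ((natCast_lt_aleph0 (n := 2)).le.trans hm)

theorem exists_finite_diff_disjoint_notMem {X T : Type u} [TopologicalSpace X] [CompactSpace X]
    [T2Space X] {f : (T → Bool) → X} (hf : Continuous f) (hsurj : Surjective f)
    {m : Cardinal.{u}} (hm : ℵ₀ ≤ m) {c : X}
    (hc : ∀ bs : Set (Set X), (𝓝 c).HasBasis (· ∈ bs) id → m < #bs)
    {S : Set T} (hS : #S ≤ m) {B : Set X} (hB : #B ≤ m) :
    ∃ u z : T → Bool, f u = c ∧ {t | u t ≠ z t}.Finite ∧ Disjoint {t | u t ≠ z t} S ∧ f z ∉ B := by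
  by_contra! hfail
  choose Rd hRdc hRd using fun d : ↥(B \ {c}) =>
    exists_countable_forall_eqOn_imp_ne hf fun h => d.2.2 h.symm
  have hRm : #↥(S ∪ ⋃ d, Rd d) ≤ m := (mk_union_le _ _).trans <| add_le_of_le hm hS <|
    mk_iUnion_le_of_le hm ((mk_le_mk_of_subset sdiff_subset).trans hB) fun d =>
      (hRdc d).le_aleph0.trans hm
  have hcyl : ∀ u v, EqOn u v (S ∪ ⋃ d, Rd d) → f u = c → f v = c := fun u v =>
    eqOn_imp_eq_of_forall_finite_diff hf
      (fun u z hu hfin hdisj => hfail u z hu hfin (hdisj.mono_right subset_union_left))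
      fun d hd hdc u v huv => hRd ⟨d, hd, hdc⟩ u v
        (huv.mono ((subset_iUnion _ _).trans subset_union_right))
  obtain ⟨bs, hbs, hbsm⟩ := exists_hasBasis_nhds_card_le_of_eqOn_imp_eq hf hsurj hcyl hm hRm
  exact (hc bs hbs).not_ge hbsm

theorem exists_pairwise_disjoint_injective_of_forall_card_le {ι β γ : Type u} {α : Type*}
    {m : Cardinal.{u}} (hm : ℵ₀ ≤ m) (hι : #ι ≤ m) {P : ι → α → Prop} {D : α → Set β}
    {g : α → γ} (hstep : ∀ i (S : Set β) (N : Set γ), #S ≤ m → #N ≤ m →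
      ∃ a, P i a ∧ #(D a) ≤ m ∧ Disjoint (D a) S ∧ g a ∉ N) :
    ∃ F : ι → α, (∀ i, P i (F i)) ∧ Pairwise (Disjoint on (D ∘ F)) ∧ Injective (g ∘ F) := by
  obtain ⟨_, _⟩ := exists_wellFoundedLT ι
  choose a ha using hstep
  -- Recursing in the subtype keeps the sets `S` of every step of cardinality `≤ m`.
  let G : ∀ i, {x : α // #(D x) ≤ m} := wellFounded_lt.fix fun i prev =>
    ⟨a i (⋃ j : Iio i, D (prev j j.2)) (range fun j : Iio i => g (prev j j.2))
      (mk_iUnion_le_of_le hm ((mk_set_le _).trans hι) fun j => (prev j j.2).2)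
      (mk_range_le.trans ((mk_set_le _).trans hι)), (ha ..).2.1⟩
  have hG : ∀ i, P i (G i) ∧ Disjoint (D (G i)) (⋃ j : Iio i, D (G j)) ∧
      g (G i) ∉ range fun j : Iio i => g (G j) := fun i => by
    rw [show G i = _ from wellFounded_lt.fix_eq _ i]
    exact ⟨(ha ..).1, (ha ..).2.2⟩
  refine ⟨fun i => G i, fun i => (hG i).1, (pairwise_disjoint_on _).2 fun i j hij => ?_,
    Injective.of_lt_imp_ne fun i j hij h => (hG j).2.2 ⟨⟨i, hij⟩, h⟩⟩
  exact ((hG j).2.1.mono_right (subset_iUnion (fun k : Iio j => D (G k)) ⟨i, hij⟩)).symm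

theorem t2Space_quotient_of_isClosed {X : Type*} [TopologicalSpace X] [CompactSpace X]
    [T2Space X] {s : Setoid X} (hs : IsClosed {q : X × X | s q.1 q.2}) :
    T2Space (Quotient s) := by
  have hs' : {q : X × X | s q.1 q.2} =
      Prod.map (Quotient.mk s) (Quotient.mk s) ⁻¹' diagonal (Quotient s) := by
    ext; simp [Quotient.eq]
  have hclosed : IsClosedMap (Quotient.mk s) := fun Z hZ => by
    rw [← isQuotientMap_quotient_mk'.isClosed_preimage]
    change IsClosed (Quotient.mk s ⁻¹' (Quotient.mk s '' Z))
    have hsat : Quotient.mk s ⁻¹' (Quotient.mk s '' Z) =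
        Prod.snd '' ({q : X × X | s q.1 q.2} ∩ Z ×ˢ Set.univ) := by
      ext; simp [Quotient.eq, and_comm]
    rw [hsat]
    exact isClosedMap_snd_of_compactSpace _ (hs.inter (hZ.prod isClosed_univ))
  have hproper : IsProperMap (Quotient.mk s) :=
    isProperMap_iff_isClosedMap_and_compact_fibers.2 ⟨continuous_quotient_mk', hclosed,
      Quotient.ind fun x => by
        have : Quotient.mk s ⁻¹' {⟦x⟧} = (fun y => (y, x)) ⁻¹' {q : X × X | s q.1 q.2} := by
          ext; simp [Quotient.eq]
        rw [this]
        exact (hs.preimage (Continuous.prodMk_left x)).isCompact⟩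
  rw [t2_iff_isClosed_diagonal, ← (Quotient.mk_surjective.prodMap
    Quotient.mk_surjective).image_preimage (diagonal _), ← hs']
  exact (hproper.prodMap hproper).isClosedMap _ hs

theorem closure_range_subset_diagonal_union {X ι : Type*} [TopologicalSpace X] [T35Space X]
    {a b : ι → X} (hab : ∀ φ : X → ℝ, Continuous φ → ∀ ε > 0,
      ∀ᶠ i in cofinite, dist (φ (a i)) (φ (b i)) < ε) :
    closure (range fun i => (a i, b i)) ⊆ diagonal X ∪ range fun i => (a i, b i) := by
  rintro ⟨x, y⟩ hxy
  by_cases hxy' : x = y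
  · exact Or.inl hxy'
  obtain ⟨φ, hφ, hφx, hφy⟩ :=
    CompletelyRegularSpace.completely_regular x {y} isClosed_singleton hxy'
  let ψ : X → ℝ := fun z => φ z
  have hψ : Continuous ψ := continuous_subtype_val.comp hφ
  let N : Set (X × X) := {q | ψ q.1 < 1 / 3} ∩ {q | 2 / 3 < ψ q.2}
  have hN : IsOpen N := (isOpen_lt (hψ.comp continuous_fst) continuous_const).inter
    (isOpen_lt continuous_const (hψ.comp continuous_snd))
  have hxyN : (x, y) ∈ N := ⟨by simp [ψ, hφx], by norm_num [ψ, hφy rfl]⟩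
  have hfin := Filter.eventually_cofinite.1 (hab ψ hψ (1 / 3) (by norm_num))
  have hNsub : N ∩ (range fun i => (a i, b i)) ⊆
      (fun i => (a i, b i)) '' {i | ¬dist (ψ (a i)) (ψ (b i)) < 1 / 3} := by
    rintro _ ⟨⟨h1, h2⟩, i, rfl⟩
    refine ⟨i, fun hi => ?_, rfl⟩
    rw [Real.dist_eq, abs_sub_lt_iff] at hi
    simp only [mem_ofPred_eq] at h1 h2
    linarith [hi.2]
  have := closure_mono hNsub (hN.inter_closure ⟨hxyN, hxy⟩)
  rw [(hfin.image _).isClosed.closure_eq] at this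
  obtain ⟨i, -, hi⟩ := this
  exact Or.inr ⟨i, hi⟩

theorem isClosed_diagonal_union_range_union_range {X ι : Type*} [TopologicalSpace X]
    [T35Space X] {a b : ι → X} (hab : ∀ φ : X → ℝ, Continuous φ → ∀ ε > 0,
      ∀ᶠ i in cofinite, dist (φ (a i)) (φ (b i)) < ε) :
    IsClosed (diagonal X ∪ (range fun i => (a i, b i)) ∪ range fun i => (b i, a i)) := by
  have hba := closure_range_subset_diagonal_union fun φ hφ ε hε =>
    (hab φ hφ ε hε).mono fun i hi => (dist_comm (φ (b i)) (φ (a i))).trans_lt hi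
  refine isClosed_of_closure_subset ?_
  rw [closure_union, closure_union, isClosed_diagonal.closure_eq]
  refine union_subset (union_subset (subset_union_left.trans subset_union_left) ?_) ?_
  · exact (closure_range_subset_diagonal_union hab).trans subset_union_left
  · exact hba.trans (union_subset (subset_union_left.trans subset_union_left) subset_union_right)

theorem exists_condensation_of_injective {X : Type u} [TopologicalSpace X] [CompactSpace X]
    [T2Space X] {C : Set X} {p : C → X} (hp : Injective p) (hpC : ∀ c, p c ∉ C)
    (hcl : IsClosed (diagonal X ∪ (range fun c : C => ((c : X), p c)) ∪
      range fun c : C => (p c, (c : X)))) :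
    ∃ (K : Type u) (_ : TopologicalSpace K), CompactSpace K ∧ T2Space K ∧
      ∃ g : X → K, Continuous g ∧ Bijective fun x : ↥(Cᶜ) => g x := by
  classical
  let r : X → X := fun x => if h : x ∈ C then p ⟨x, h⟩ else x
  have hrC : ∀ c : C, r c = p c := fun c => dif_pos c.2
  have hr : ∀ x ∉ C, r x = x := fun x hx => dif_neg hx
  have hker : {q : X × X | Setoid.ker r q.1 q.2} = diagonal X ∪
      (range fun c : C => ((c : X), p c)) ∪ range fun c : C => (p c, (c : X)) := by
    ext ⟨x, y⟩
    simp only [mem_ofPred_eq, Setoid.ker_def, mem_union, mem_diagonal_iff, mem_range,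
      Prod.mk.injEq]
    constructor
    · intro h
      by_cases hx : x ∈ C <;> by_cases hy : y ∈ C
      · exact Or.inl (Or.inl (congrArg Subtype.val (hp (by simpa [r, hx, hy] using h))))
      · exact Or.inl (Or.inr ⟨⟨x, hx⟩, rfl, by simpa [r, hx, hy] using h⟩)
      · exact Or.inr ⟨⟨y, hy⟩, by simpa [r, hx, hy] using h.symm, rfl⟩
      · exact Or.inl (Or.inl (by simpa [r, hx, hy] using h))
    · rintro ((rfl | ⟨c, rfl, rfl⟩) | ⟨c, rfl, rfl⟩)
      · rfl
      · rw [hrC, hr _ (hpC c)]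
      · rw [hrC, hr _ (hpC c)]
  have := t2Space_quotient_of_isClosed (hker ▸ hcl)
  refine ⟨Quotient (Setoid.ker r), inferInstance, inferInstance, inferInstance, Quotient.mk _,
    continuous_quotient_mk', fun x y hxy => Subtype.ext ?_, Quotient.ind fun x => ?_⟩
  · simpa [hr _ x.2, hr _ y.2] using Quotient.exact hxy
  by_cases hx : x ∈ C
  · refine ⟨⟨p ⟨x, hx⟩, hpC _⟩, Quotient.sound (Setoid.ker_def.2 ?_)⟩
    rw [hr _ (hpC _)]
    exact (hrC ⟨x, hx⟩).symm
  · exact ⟨⟨x, hx⟩, rfl⟩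

/-- a dyadic compact space whose character at every point exceeds `𝔪` is a
strictly `a_𝔪`-space.  (χ(x,X) > 𝔪 is expressed as: every neighborhood base at `x` has
cardinality greater than `𝔪`.) -/
theorem stmt_15 (m : Cardinal.{u}) (hm : ℵ₀ ≤ m)
    (X : Type u) [TopologicalSpace X] [CompactSpace X] [T2Space X]
    (hdyadic : ∃ (T : Type u) (f : (T → Bool) → X), Continuous f ∧ Function.Surjective f)
    (hchar : ∀ x : X, ∀ bs : Set (Set X),
      ((∀ U ∈ bs, U ∈ nhds x) ∧ ∀ V ∈ nhds x, ∃ U ∈ bs, U ⊆ V) → m < #bs) :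
    StrictATauSpace m X := by
  refine ⟨‹_›, ‹_›, fun C hC => ?_⟩
  obtain ⟨T, f, hf, hsurj⟩ := hdyadic
  have hχ : ∀ x : X, ∀ bs : Set (Set X), (𝓝 x).HasBasis (· ∈ bs) id → m < #bs :=
    fun x bs hbs => hchar x bs ⟨fun U hU => hbs.mem_of_mem hU, fun V hV => hbs.mem_iff.1 hV⟩
  obtain ⟨q, hq, hdisj, hinj⟩ := exists_pairwise_disjoint_injective_of_forall_card_le hm hC
    (P := fun (c : C) (q : (T → Bool) × (T → Bool)) => f q.1 = c ∧ f q.2 ∉ C)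
    (D := fun q => {t | q.1 t ≠ q.2 t}) (g := fun q => f q.2) fun c S N hS hN => by
      obtain ⟨u, z, hu, hfin, hdisj, hz⟩ :=
        exists_finite_diff_disjoint_notMem hf hsurj hm (hχ c) hS (B := C ∪ N)
          ((mk_union_le _ _).trans (add_le_of_le hm hC hN))
      exact ⟨(u, z), ⟨hu, fun h => hz (Or.inl h)⟩, hfin.countable.le_aleph0.trans hm, hdisj,
        fun h => hz (Or.inr h)⟩
  refine exists_condensation_of_injective hinj (fun c => (hq c).2)
    (isClosed_diagonal_union_range_union_range fun φ hφ ε hε => ?_)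
  simpa only [comp_apply, (hq _).1] using
    eventually_cofinite_dist_lt_of_pairwise_disjoint (hφ.comp hf) hdisj hε
end
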